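/- arXiv:2312.04516 — 4 statements merged into one kernel-verified Lean document; each statement's English description precedes it below -/
import Mathlib

section
/- Let α and β be nonempty types and let u : α → β → ℝ be a bounded function. Fix a baseline first-stage action a₀ : α and a baseline continuation policy τ : α → β. Then (⨆ a, ⨆ b, u a b) − u a₀ (τ a₀) ≤ ((⨆ a, u a (τ a)) − u a₀ (τ a₀)) + ⨆ a, ((⨆ b, u a b) − u a (τ a)). In words: the total best-response utility loss is at most the immediate utility loss (optimizing only the first-stage action while keeping the continuation policy τ fixed) plus the worst-case, over first-stage actions, of the best-response loss in the ensuing subgame. -/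
/-! For each first-stage action `a`, the subgame optimum `⨆ b, u a b` is the baseline value
`u a (τ a)` plus the subgame loss; the supremum of a sum is at most the sum of the suprema. -/

open Set

section OrderedGroup

variable {ι : Sort*} {G : Type*} [AddCommGroup G]

theorem bddAbove_range_sub [Preorder G] [IsOrderedAddMonoid G] {f g : ι → G}
    (hf : BddAbove (range f)) (hg : BddBelow (range g)) :
    BddAbove (range fun i => f i - g i) := by
  obtain ⟨M, hM⟩ := hf
  obtain ⟨m, hm⟩ := hg
  exact ⟨M - m, forall_mem_range.2 fun i =>
    sub_le_sub (hM (mem_range_self i)) (hm (mem_range_self i))⟩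

theorem ciSup_le_ciSup_add_ciSup_sub [Nonempty ι] [ConditionallyCompleteLattice G]
    [IsOrderedAddMonoid G] {f g : ι → G} (hg : BddAbove (range g))
    (hfg : BddAbove (range fun i => f i - g i)) :
    ⨆ i, f i ≤ (⨆ i, g i) + ⨆ i, (f i - g i) :=
  ciSup_le fun i =>
    calc f i = g i + (f i - g i) := (add_sub_cancel (g i) (f i)).symm
      _ ≤ (⨆ i, g i) + ⨆ i, (f i - g i) := add_le_add (le_ciSup hg i) (le_ciSup hfg i)

end OrderedGroup

/-- Two-stage core of the Decomposition Lemma: the total best-response utility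
loss is at most the immediate utility loss plus the worst-case downstream
best-response loss. -/
theorem decomposition_two_stage {α β : Type*} [Nonempty α] [Nonempty β]
    (u : α → β → ℝ) (hbdd : ∃ C : ℝ, ∀ a b, |u a b| ≤ C)
    (a₀ : α) (τ : α → β) :
    (⨆ a, ⨆ b, u a b) - u a₀ (τ a₀) ≤
      ((⨆ a, u a (τ a)) - u a₀ (τ a₀)) + ⨆ a, ((⨆ b, u a b) - u a (τ a)) := by
  obtain ⟨C, hC⟩ := hbdd
  have hle (a b) : u a b ≤ C := (abs_le.mp (hC a b)).2
  have hge (a b) : -C ≤ u a b := (abs_le.mp (hC a b)).1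
  have hsup : BddAbove (range fun a => ⨆ b, u a b) :=
    ⟨C, forall_mem_range.2 fun a => ciSup_le (hle a)⟩
  have hτ_above : BddAbove (range fun a => u a (τ a)) :=
    ⟨C, forall_mem_range.2 fun a => hle a (τ a)⟩
  have hτ_below : BddBelow (range fun a => u a (τ a)) :=
    ⟨-C, forall_mem_range.2 fun a => hge a (τ a)⟩
  have hsplit := ciSup_le_ciSup_add_ciSup_sub hτ_above (bddAbove_range_sub hsup hτ_below)
  linarith
end

section
/- Let n ∈ ℕ, let α : Fin n → Type be a family of nonempty action types, and let u : (∀ i, α i) → ℝ be bounded. Fix a baseline strategy σ : ∀ i, α i. For each round t : Fin n define the worst-case immediate loss L t = ⨆ over x : (∀ i, α i) of ((⨆ over a : α t of u applied to the play that equals x on coordinates i < t, equals a at coordinate t, and equals σ on coordinates i > t) − u applied to the play that equals x on coordinates i < t and equals σ on coordinates i ≥ t). Then (⨆ over x of u x) − u σ ≤ ∑ over t : Fin n of L t. -/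
/-!
Let `V k` be the best utility reachable by deviating from `σ` in the first `k` rounds only, so
that `V 0 = u σ` and `V n = ⨆ x, u x`. A play deviating in the first `k + 1` rounds arises from
one deviating in the first `k` rounds by changing round `k` alone, which gains at most the
immediate loss `L k`; hence `V (k + 1) ≤ V k + L k`, and the theorem follows by telescoping.
-/

open Set Function

namespace TotalLoss

variable {ι : Type*} {α : ι → Type*}

noncomputable def deviationValue (u : (∀ i, α i) → ℝ) (σ : ∀ i, α i) (S : Set ι) : ℝ :=
  by classical exact ⨆ x, u (S.piecewise x σ)

noncomputable def immediateLoss [DecidableEq ι] (u : (∀ i, α i) → ℝ) (σ : ∀ i, α i)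
    (S : Set ι) (t : ι) : ℝ :=
  by classical exact ⨆ x, ((⨆ a : α t, u (update (S.piecewise x σ) t a)) - u (S.piecewise x σ))

@[simp]
theorem deviationValue_empty (u : (∀ i, α i) → ℝ) (σ : ∀ i, α i) :
    deviationValue u σ ∅ = u σ := by
  have : Nonempty (∀ i, α i) := ⟨σ⟩
  simp [deviationValue]

@[simp]
theorem deviationValue_univ (u : (∀ i, α i) → ℝ) (σ : ∀ i, α i) :
    deviationValue u σ univ = ⨆ x, u x := by
  simp [deviationValue]

theorem deviationValue_insert_le [DecidableEq ι] {u : (∀ i, α i) → ℝ}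
    (hu : BddAbove (range u)) (hu' : BddBelow (range u)) (σ : ∀ i, α i) (S : Set ι) (t : ι) :
    deviationValue u σ (insert t S) ≤ deviationValue u σ S + immediateLoss u σ S t := by
  classical
  obtain ⟨C, hC⟩ := hu
  obtain ⟨c, hc⟩ := hu'
  have : Nonempty (∀ i, α i) := ⟨σ⟩
  have : Nonempty (α t) := ⟨σ t⟩
  unfold deviationValue
  refine ciSup_le fun x => ?_
  rw [piecewise_insert]
  have hbest : u (update (S.piecewise x σ) t (x t)) ≤ ⨆ a : α t, u (update (S.piecewise x σ) t a) :=
    le_ciSup ⟨C, forall_mem_range.2 fun a => hC (mem_range_self _)⟩ (x t)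
  have hgain : (⨆ a : α t, u (update (S.piecewise x σ) t a)) - u (S.piecewise x σ) ≤
      immediateLoss u σ S t := by
    refine le_ciSup (f := fun y => (⨆ a : α t, u (update (S.piecewise y σ) t a)) -
      u (S.piecewise y σ)) ⟨C - c, forall_mem_range.2 fun y => ?_⟩ x
    have hsup : (⨆ a : α t, u (update (S.piecewise y σ) t a)) ≤ C :=
      ciSup_le fun a => hC (mem_range_self _)
    linarith [hc (mem_range_self (S.piecewise y σ))]
  have hstay : u (S.piecewise x σ) ≤ ⨆ y, u (S.piecewise y σ) :=
    le_ciSup (f := fun y => u (S.piecewise y σ))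
      ⟨C, forall_mem_range.2 fun y => hC (mem_range_self _)⟩ x
  linarith

section Prefix

variable [Preorder ι] [DecidableLT ι] (x σ : ∀ i, α i) (t : ι)

theorem piecewise_Iio_eq_ite [∀ i, Decidable (i ∈ Iio t)] :
    (Iio t).piecewise x σ = fun i => if i < t then x i else σ i := by
  funext i
  by_cases h : i < t <;> simp [piecewise, h]

theorem update_piecewise_Iio_eq_dite [DecidableEq ι] [∀ i, Decidable (i ∈ Iio t)] (a : α t) :
    update ((Iio t).piecewise x σ) t a =
      fun i => if _ : i < t then x i else if h : i = t then h.symm ▸ a else σ i := by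
  funext i
  by_cases h : i = t
  · subst h
    simp
  · by_cases h' : i < t <;> simp [piecewise, h, h']

theorem immediateLoss_Iio [DecidableEq ι] (u : (∀ i, α i) → ℝ) :
    immediateLoss u σ (Iio t) t = ⨆ x : ∀ i, α i,
      ((⨆ a : α t, u (fun i => if _ : i < t then x i else if h : i = t then h.symm ▸ a else σ i))
        - u (fun i => if i < t then x i else σ i)) := by
  simp only [immediateLoss, update_piecewise_Iio_eq_dite]
  simp only [piecewise_Iio_eq_ite]

end Prefix

theorem deviationValue_univ_sub_le_sum_immediateLoss {n : ℕ} {α : Fin n → Type*}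
    {u : (∀ i, α i) → ℝ} (hu : BddAbove (range u)) (hu' : BddBelow (range u)) (σ : ∀ i, α i) :
    deviationValue u σ univ - u σ ≤ ∑ t : Fin n, immediateLoss u σ (Iio t) t := by
  set V : ℕ → ℝ := fun k => deviationValue u σ {i : Fin n | (i : ℕ) < k}
  have hV0 : V 0 = u σ := by simp [V]
  have hVn : V n = deviationValue u σ univ := by simp [V]
  have hstep (t : Fin n) : V (t + 1) - V t ≤ immediateLoss u σ (Iio t) t := by
    have hsucc : {i : Fin n | (i : ℕ) < t + 1} = insert t (Iio t) := by
      ext i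
      simp only [mem_ofPred_eq, mem_insert_iff, mem_Iio, Fin.lt_def, Fin.ext_iff]
      omega
    have hcurr : {i : Fin n | (i : ℕ) < t} = Iio t := rfl
    simp only [V, hsucc, hcurr]
    linarith [deviationValue_insert_le hu hu' σ (Iio t) t]
  calc deviationValue u σ univ - u σ = ∑ t : Fin n, (V (t + 1) - V t) := by
        rw [Fin.sum_univ_eq_sum_range (fun k => V (k + 1) - V k), Finset.sum_range_sub, hV0, hVn]
    _ ≤ ∑ t : Fin n, immediateLoss u σ (Iio t) t := Finset.sum_le_sum fun t _ => hstep t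

end TotalLoss

theorem total_loss_le_sum_immediate_losses_general (n : ℕ) (α : Fin n → Type*)
    (u : (∀ i, α i) → ℝ)
    (hbdd : ∃ C : ℝ, ∀ x, |u x| ≤ C) (σ : ∀ i, α i) :
    (⨆ x, u x) - u σ ≤
      ∑ t : Fin n, ⨆ x : ∀ i, α i,
        ((⨆ a : α t,
            u (fun i => if h : i < t then x i else if h' : i = t then h'.symm ▸ a else σ i))
          - u (fun i => if i < t then x i else σ i)) := by
  obtain ⟨C, hC⟩ := hbdd
  have hu : BddAbove (range u) := ⟨C, forall_mem_range.2 fun x => (abs_le.1 (hC x)).2⟩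
  have hu' : BddBelow (range u) := ⟨-C, forall_mem_range.2 fun x => (abs_le.1 (hC x)).1⟩
  simpa only [TotalLoss.immediateLoss_Iio, TotalLoss.deviationValue_univ] using
    TotalLoss.deviationValue_univ_sub_le_sum_immediateLoss hu hu' σ

/-- Deterministic core of the ε-bound corollary: the total best-response loss of
the baseline strategy profile σ is bounded by the sum over rounds of the
worst-case immediate utility loss. -/
theorem total_loss_le_sum_immediate_losses (n : ℕ) (α : Fin n → Type*)
    [∀ i, Nonempty (α i)] (u : (∀ i, α i) → ℝ)
    (hbdd : ∃ C : ℝ, ∀ x, |u x| ≤ C) (σ : ∀ i, α i) :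
    (⨆ x, u x) - u σ ≤
      ∑ t : Fin n, ⨆ x : ∀ i, α i,
        ((⨆ a : α t,
            u (fun i => if h : i < t then x i else if h' : i = t then h'.symm ▸ a else σ i))
          - u (fun i => if i < t then x i else σ i)) :=
  total_loss_le_sum_immediate_losses_general n α u hbdd σ
end

section
/- Let d ∈ ℕ, let y, z : Fin d → ℝ with y ≤ z (componentwise), let f : (Fin d → ℝ) → ℝ be convex on the hyperrectangle Set.Icc y z, and let g : (Fin d → ℝ) → ℝ be affine, i.e., g = l + c for some linear map l : (Fin d → ℝ) →ₗ[ℝ] ℝ and constant c ∈ ℝ. Then for every x ∈ Set.Icc y z there exists a vertex w of the hyperrectangle (a point with w k = y k or w k = z k for every k) such that f x − g x ≤ f w − g w; hence the supremum of the loss f − g over the hyperrectangle is bounded by its maximum over the finitely many vertices. -/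
/-!
The loss `f - g` is convex, being a convex function minus an affine one. The box `[y, z]` is the
product of the segments `[y k, z k]`, hence the convex hull of its vertices, and a convex function
on the convex hull of a set is dominated at each point by its value at some point of that set.
-/

open Set

theorem pi_pair_subset_Icc {ι α : Type*} [Preorder α] {y z : ι → α} (hyz : y ≤ z) :
    univ.pi (fun k ↦ {y k, z k}) ⊆ Icc y z := by
  intro w hw
  constructor <;> intro k <;>
    obtain hk | hk : w k = y k ∨ w k = z k := hw k (mem_univ k) <;> simp [hk, hyz k]

section Box

variable {𝕜 ι : Type*} [Finite ι] [Field 𝕜] [LinearOrder 𝕜] [IsStrictOrderedRing 𝕜]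
  {y z : ι → 𝕜}

theorem Icc_subset_convexHull_pi_pair : Icc y z ⊆ convexHull 𝕜 (univ.pi fun k ↦ {y k, z k}) :=
  fun x hx ↦ mem_convexHull_pi fun k _ ↦ by
    rw [convexHull_pair, segment_eq_Icc (hx.1 k |>.trans (hx.2 k))]
    exact ⟨hx.1 k, hx.2 k⟩

theorem ConvexOn.exists_vertex_ge {f : (ι → 𝕜) → 𝕜} (hf : ConvexOn 𝕜 (Icc y z) f)
    {x : ι → 𝕜} (hx : x ∈ Icc y z) : ∃ w, (∀ k, w k = y k ∨ w k = z k) ∧ f x ≤ f w := by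
  obtain ⟨w, hw, hfw⟩ := hf.exists_ge_of_mem_convexHull
    (pi_pair_subset_Icc (hx.1.trans hx.2)) (Icc_subset_convexHull_pi_pair hx)
  exact ⟨w, fun k ↦ hw k (mem_univ k), hfw⟩

end Box

theorem convex_sub_affine_le_vertex_general (d : ℕ) (y z : Fin d → ℝ)
    (f : (Fin d → ℝ) → ℝ) (hf : ConvexOn ℝ (Set.Icc y z) f)
    (g : (Fin d → ℝ) → ℝ) (l : (Fin d → ℝ) →ₗ[ℝ] ℝ) (c : ℝ)
    (hg : ∀ x, g x = l x + c) :
    ∀ x ∈ Set.Icc y z, ∃ w : Fin d → ℝ,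
      (∀ k, w k = y k ∨ w k = z k) ∧ f x - g x ≤ f w - g w := by
  have hg_affine : g = fun x ↦ l x + c := funext hg
  have hloss : ConvexOn ℝ (Icc y z) (f - g) :=
    hf.sub (hg_affine ▸ (l.concaveOn (convex_Icc y z)).add_const c)
  exact fun x hx ↦ hloss.exists_vertex_ge hx

/-- The loss `f - g` between a convex function `f` and an affine function `g`
on a hyperrectangle is dominated, at each point, by its value at some vertex. -/
theorem convex_sub_affine_le_vertex (d : ℕ) (y z : Fin d → ℝ) (hyz : y ≤ z)
    (f : (Fin d → ℝ) → ℝ) (hf : ConvexOn ℝ (Set.Icc y z) f)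
    (g : (Fin d → ℝ) → ℝ) (l : (Fin d → ℝ) →ₗ[ℝ] ℝ) (c : ℝ)
    (hg : ∀ x, g x = l x + c) :
    ∀ x ∈ Set.Icc y z, ∃ w : Fin d → ℝ,
      (∀ k, w k = y k ∨ w k = z k) ∧ f x - g x ≤ f w - g w :=
  convex_sub_affine_le_vertex_general d y z f hf g l c hg
end

section
/- Let Ω be a nonempty finite type, p : Ω → ℝ with p ω ≥ 0 for all ω and ∑_ω p ω = 1, let α and β be nonempty types, and let u : α → Ω → β → ℝ be bounded. For a current-round action a : α and a continuation policy τ : Ω → β, write V a τ = ∑_ω p ω · u a ω (τ ω). Fix a baseline action a₀ : α and a baseline continuation σ : α → Ω → β. Then (⨆ a, ⨆ τ : Ω → β, V a τ) − V a₀ (σ a₀) ≤ ((⨆ a, V a (σ a)) − V a₀ (σ a₀)) + ⨆ a, ⨆ ω, ((⨆ b, u a ω b) − u a ω (σ a ω)). -/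
/-!
In every successor state ω, playing τ ω instead of σ a ω gains at most the downstream
loss `(⨆ b, u a ω b) - u a ω (σ a ω)`, hence at most its supremum `D` over all `a` and `ω`.
Averaging with the weights `p` gives `V a τ ≤ V a (σ a) + D ≤ (⨆ a, V a (σ a)) + D`, and taking
the supremum over `a` and `τ` proves the claim. Boundedness of `u` is what makes the real
suprema genuine least upper bounds rather than the junk value `0`.
-/

open Finset Set

theorem Finset.sum_mul_le_sum_mul_add {ι : Type*} {s : Finset ι} {p f g : ι → ℝ} {c : ℝ}
    (hp0 : ∀ i ∈ s, 0 ≤ p i) (hp1 : ∑ i ∈ s, p i = 1) (h : ∀ i ∈ s, f i ≤ g i + c) :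
    ∑ i ∈ s, p i * f i ≤ ∑ i ∈ s, p i * g i + c :=
  calc ∑ i ∈ s, p i * f i ≤ ∑ i ∈ s, p i * (g i + c) :=
        sum_le_sum fun i hi => mul_le_mul_of_nonneg_left (h i hi) (hp0 i hi)
    _ = ∑ i ∈ s, p i * g i + c := by
        simp only [mul_add, sum_add_distrib, ← sum_mul, hp1, one_mul]

theorem Finset.sum_mul_le_of_le {ι : Type*} {s : Finset ι} {p f : ι → ℝ} {c : ℝ}
    (hp0 : ∀ i ∈ s, 0 ≤ p i) (hp1 : ∑ i ∈ s, p i = 1) (h : ∀ i ∈ s, f i ≤ c) :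
    ∑ i ∈ s, p i * f i ≤ c := by
  simpa using sum_mul_le_sum_mul_add (g := 0) hp0 hp1 (by simpa using h)

theorem bayesian_decomposition_general {Ω : Type*} [Fintype Ω]
    (p : Ω → ℝ) (hp0 : ∀ ω, 0 ≤ p ω) (hp1 : ∑ ω, p ω = 1)
    {α β : Type*} [Nonempty α] [Nonempty β]
    (u : α → Ω → β → ℝ) (hbdd : ∃ C : ℝ, ∀ a ω b, |u a ω b| ≤ C)
    (a₀ : α) (σ : α → Ω → β) :
    (⨆ a, ⨆ τ : Ω → β, ∑ ω, p ω * u a ω (τ ω))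
        - ∑ ω, p ω * u a₀ ω (σ a₀ ω) ≤
      ((⨆ a, ∑ ω, p ω * u a ω (σ a ω)) - ∑ ω, p ω * u a₀ ω (σ a₀ ω))
        + ⨆ a, ⨆ ω, ((⨆ b, u a ω b) - u a ω (σ a ω)) := by
  obtain ⟨C, hC⟩ := hbdd
  have hub : ∀ a ω b, u a ω b ≤ C := fun a ω b => (abs_le.mp (hC a ω b)).2
  have hlb : ∀ a ω b, -C ≤ u a ω b := fun a ω b => (abs_le.mp (hC a ω b)).1
  set D := ⨆ a, ⨆ ω, ((⨆ b, u a ω b) - u a ω (σ a ω))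
  set S := ⨆ a, ∑ ω, p ω * u a ω (σ a ω)
  have hloss_le_D : ∀ a ω, (⨆ b, u a ω b) - u a ω (σ a ω) ≤ D :=
    le_ciSup₂ <| bddAbove_iff_subset_Iic.2 ⟨C + C, iUnion_subset fun a => range_subset_iff.2
      fun ω => mem_Iic.2 (by linarith [ciSup_le (hub a ω), hlb a ω (σ a ω)])⟩
  have hbaseline_le_S : ∀ a, ∑ ω, p ω * u a ω (σ a ω) ≤ S :=
    le_ciSup ⟨C, forall_mem_range.2 fun a =>
      sum_mul_le_of_le (fun ω _ => hp0 ω) hp1 fun ω _ => hub a ω (σ a ω)⟩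
  have hV_le : ∀ a (τ : Ω → β), ∑ ω, p ω * u a ω (τ ω) ≤ S + D := fun a τ =>
    calc ∑ ω, p ω * u a ω (τ ω) ≤ ∑ ω, p ω * u a ω (σ a ω) + D :=
          sum_mul_le_sum_mul_add (fun ω _ => hp0 ω) hp1 fun ω _ => by
            linarith [le_ciSup ⟨C, forall_mem_range.2 (hub a ω)⟩ (τ ω), hloss_le_D a ω]
      _ ≤ S + D := by linarith [hbaseline_le_S a]
  linarith [ciSup_le fun a => ciSup_le (hV_le a)]

/-- Bayesian (finite-state) form of the Decomposition Lemma: the best-response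
expected-utility loss is at most the immediate loss plus the supremum over
successor states of the downstream best-response loss. -/
theorem bayesian_decomposition {Ω : Type*} [Fintype Ω] [Nonempty Ω]
    (p : Ω → ℝ) (hp0 : ∀ ω, 0 ≤ p ω) (hp1 : ∑ ω, p ω = 1)
    {α β : Type*} [Nonempty α] [Nonempty β]
    (u : α → Ω → β → ℝ) (hbdd : ∃ C : ℝ, ∀ a ω b, |u a ω b| ≤ C)
    (a₀ : α) (σ : α → Ω → β) :
    (⨆ a, ⨆ τ : Ω → β, ∑ ω, p ω * u a ω (τ ω))
        - ∑ ω, p ω * u a₀ ω (σ a₀ ω) ≤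
      ((⨆ a, ∑ ω, p ω * u a ω (σ a ω)) - ∑ ω, p ω * u a₀ ω (σ a₀ ω))
        + ⨆ a, ⨆ ω, ((⨆ b, u a ω b) - u a ω (σ a ω)) :=
  bayesian_decomposition_general p hp0 hp1 u hbdd a₀ σ
end
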